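/- arXiv:2305.11485 — 2 statements merged into one kernel-verified Lean document; each statement's English description precedes it below -/
import Mathlib

section
/- For any integers k ≥ 1 and l ≥ 1, the triangle T_{k,l} with vertices (0,0), (1+1/l, 0), and (0, (l+1)(k+1)) contains exactly k interior integral points and has area (l+1)²(k+1)/(2l). -/
/-!
Up to the factor `1 + 1/l`, the hypotenuse of `T_{k,l}` is the line `l(k+1)x + y = (l+1)(k+1)`.
An interior lattice point has `x ≥ 1`, and `x ≥ 2` would force `2l(k+1) < (l+1)(k+1)`, i.e.
`l < 1`; so the interior lattice points are exactly `(1, n)` with `1 ≤ n ≤ k`. The area is half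
the product of the legs `(1 + 1/l)` and `(l+1)(k+1)`, computed as a region under a line.
-/

open MeasureTheory Set

noncomputable section

/-- The set of integral lattice points of `ℝ × ℝ`. -/
def latticePts : Set (ℝ × ℝ) := {p | ∃ m n : ℤ, p = ((m : ℝ), (n : ℝ))}

/-- A planar convex body: compact, convex, with nonempty interior. -/
def IsConvexBody (K : Set (ℝ × ℝ)) : Prop :=
  IsCompact K ∧ Convex ℝ K ∧ (interior K).Nonempty

/-- The width of `K` in direction `v` (as a linear functional via the dot product). -/
def width (K : Set (ℝ × ℝ)) (v : ℝ × ℝ) : ℝ :=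
  sSup ((fun p => v.1 * p.1 + v.2 * p.2) '' K) - sInf ((fun p => v.1 * p.1 + v.2 * p.2) '' K)

/-- The lattice width of `K`: minimal width over nonzero integral dual vectors. -/
def latticeWidth (K : Set (ℝ × ℝ)) : ℝ :=
  sInf {w | ∃ v : ℤ × ℤ, v ≠ 0 ∧ w = width K ((v.1 : ℝ), (v.2 : ℝ))}

/-- The length (1-dimensional Lebesgue measure) of the vertical slice of `K` at `x₁ = t`. -/
def sliceLen (K : Set (ℝ × ℝ)) (t : ℝ) : ℝ :=
  (volume {y : ℝ | (t, y) ∈ K}).toReal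

/-- The set of positions of maximal vertical slicing length. -/
def maxSlicePos (K : Set (ℝ × ℝ)) : Set ℝ :=
  {t ∈ Prod.fst '' K | ∀ s ∈ Prod.fst '' K, sliceLen K s ≤ sliceLen K t}

/-- The position of the longest vertical slicing length: midpoint of the interval of maximizers. -/
def plvsl (K : Set (ℝ × ℝ)) : ℝ :=
  (sInf (maxSlicePos K) + sSup (maxSlicePos K)) / 2

/-- The area of a planar set. -/
def area (K : Set (ℝ × ℝ)) : ℝ := (volume K).toReal

/-- The number of interior integral points of `K`. -/
def intPts (K : Set (ℝ × ℝ)) : ℕ := (interior K ∩ latticePts).ncard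

/-- The triangle `T_{k,l}` with vertices `(0,0)`, `(1+1/l,0)` and `(0,(l+1)(k+1))`. -/
def Tkl (k l : ℤ) : Set (ℝ × ℝ) :=
  convexHull ℝ {((0 : ℝ), (0 : ℝ)), (1 + 1 / (l : ℝ), 0), (0, ((l : ℝ) + 1) * ((k : ℝ) + 1))}

/-- A lattice polygon: convex hull of a nonempty finite set of lattice points,
two-dimensional (nonempty interior). -/
def IsLatticePolygon (P : Set (ℝ × ℝ)) : Prop :=
  (∃ S : Finset (ℤ × ℤ), S.Nonempty ∧
      P = convexHull ℝ ((fun q : ℤ × ℤ => ((q.1 : ℝ), (q.2 : ℝ))) '' ↑S)) ∧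
    (interior P).Nonempty

/-- The affine map given by an integral matrix and integral translation vector. -/
def UnimodMap (a b c d e f : ℤ) : (ℝ × ℝ) → (ℝ × ℝ) := fun p =>
  ((a : ℝ) * p.1 + (b : ℝ) * p.2 + (e : ℝ), (c : ℝ) * p.1 + (d : ℝ) * p.2 + (f : ℝ))

/-- Affine unimodular equivalence of subsets of the plane. -/
def UnimodEquiv (P Q : Set (ℝ × ℝ)) : Prop :=
  ∃ a b c d e f : ℤ, (a * d - b * c = 1 ∨ a * d - b * c = -1) ∧
    Q = UnimodMap a b c d e f '' P

/-- The `m`-th multiple of the standard lattice triangle `Δ₂`. -/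
def stdTriangle (m : ℤ) : Set (ℝ × ℝ) :=
  convexHull ℝ {((0 : ℝ), (0 : ℝ)), ((m : ℝ), 0), (0, (m : ℝ))}

/-- The (outer) normal cone of `P` at a point `x`. -/
def normalCone (P : Set (ℝ × ℝ)) (x : ℝ × ℝ) : Set (ℝ × ℝ) :=
  {v | ∀ y ∈ P, v.1 * y.1 + v.2 * y.2 ≤ v.1 * x.1 + v.2 * x.2}

/-- The rays of the smooth refinement of the normal fan of `P`: for each full-dimensional
normal cone `σ` (i.e. the normal cone of a vertex of `P`), the rays through the lattice points
on the bounded edges of `conv (σ ∩ (ℤ² \ {0}))`, which for a two-dimensional cone are exactly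
the irreducible lattice points (Hilbert basis elements) of `σ`. -/
def smoothFanRays (P : Set (ℝ × ℝ)) : Set (ℤ × ℤ) :=
  {u | u ≠ 0 ∧ ∃ x ∈ P, (interior (normalCone P x)).Nonempty ∧
    ((u.1 : ℝ), (u.2 : ℝ)) ∈ normalCone P x ∧
    ¬ ∃ v w : ℤ × ℤ, v ≠ 0 ∧ w ≠ 0 ∧ ((v.1 : ℝ), (v.2 : ℝ)) ∈ normalCone P x ∧
      ((w.1 : ℝ), (w.2 : ℝ)) ∈ normalCone P x ∧ u = v + w}

/-- `P` has denominator dividing `l`: it is the convex hull of finitely many points of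
`(1/l)·ℤ²`. -/
def HasDenom (P : Set (ℝ × ℝ)) (l : ℤ) : Prop :=
  ∃ S : Finset (ℤ × ℤ), S.Nonempty ∧
    P = convexHull ℝ ((fun q : ℤ × ℤ => ((q.1 : ℝ) / (l : ℝ), (q.2 : ℝ) / (l : ℝ))) '' ↑S)

def rightTriangle (a b : ℝ) : Set (ℝ × ℝ) :=
  {p | 0 ≤ p.1 ∧ 0 ≤ p.2 ∧ b * p.1 + a * p.2 ≤ a * b}

lemma convex_rightTriangle (a b : ℝ) : Convex ℝ (rightTriangle a b) :=
  (convex_halfSpace_ge (LinearMap.fst ℝ ℝ ℝ).isLinear 0).inter <|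
    (convex_halfSpace_ge (LinearMap.snd ℝ ℝ ℝ).isLinear 0).inter <|
    convex_halfSpace_le (b • LinearMap.fst ℝ ℝ ℝ + a • LinearMap.snd ℝ ℝ ℝ).isLinear (a * b)

lemma convexHull_eq_rightTriangle {a b : ℝ} (ha : 0 < a) (hb : 0 < b) :
    convexHull ℝ {((0 : ℝ), (0 : ℝ)), (a, 0), (0, b)} = rightTriangle a b := by
  refine (convexHull_min ?_ (convex_rightTriangle a b)).antisymm fun p ⟨hx, hy, hxy⟩ => ?_
  · rintro p (rfl | rfl | rfl) <;> simp [rightTriangle, ha.le, hb.le, mul_comm, mul_nonneg]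
  have hp : ∑ i, ![1 - p.1 / a - p.2 / b, p.1 / a, p.2 / b] i •
      ![((0 : ℝ), (0 : ℝ)), (a, 0), (0, b)] i = p := by
    ext <;> simp [Fin.sum_univ_three, ha.ne', hb.ne']
  rw [← hp]
  refine (convex_convexHull ℝ _).sum_mem (fun i _ => ?_) (by simp [Fin.sum_univ_three]; ring)
    (fun i _ => subset_convexHull ℝ _ (by fin_cases i <;> simp))
  have : p.1 / a + p.2 / b ≤ 1 := by
    rw [div_add_div _ _ ha.ne' hb.ne', div_le_one (by positivity)]; linarith
  fin_cases i <;> simp <;> first | linarith | positivity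

lemma interior_rightTriangle {a b : ℝ} (ha : a ≠ 0) :
    interior (rightTriangle a b) = {p | 0 < p.1 ∧ 0 < p.2 ∧ b * p.1 + a * p.2 < a * b} := by
  let L : StrongDual ℝ (ℝ × ℝ) := b • .fst ℝ ℝ ℝ + a • .snd ℝ ℝ ℝ
  have hL : IsOpenMap L :=
    L.isOpenMap_of_ne_zero fun h => ha (by simpa [L] using congr($h (0, 1)))
  have : rightTriangle a b = Prod.fst ⁻¹' Ici 0 ∩ (Prod.snd ⁻¹' Ici 0 ∩ L ⁻¹' Iic (a * b)) := rfl
  rw [this, interior_inter, interior_inter,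
    ← isOpenMap_fst.preimage_interior_eq_interior_preimage continuous_fst,
    ← isOpenMap_snd.preimage_interior_eq_interior_preimage continuous_snd,
    ← hL.preimage_interior_eq_interior_preimage L.continuous, interior_Ici, interior_Iic]
  rfl

lemma volume_rightTriangle {a b : ℝ} (ha : 0 < a) (hb : 0 < b) :
    volume (rightTriangle a b) = ENNReal.ofReal (a * b / 2) := by
  have hg : Continuous fun x : ℝ => b - b / a * x := by fun_prop
  have hregion : interior (rightTriangle a b) =
      regionBetween (fun _ => 0) (fun x => b - b / a * x) (Ioo 0 a) := by
    ext p
    simp only [interior_rightTriangle ha.ne', regionBetween, mem_ofPred_eq, mem_Ioo]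
    rw [div_mul_eq_mul_div, sub_div' ha.ne', lt_div_iff₀ ha]
    constructor
    · rintro ⟨hx, hy, hxy⟩
      exact ⟨⟨hx, by nlinarith⟩, hy, by linarith⟩
    · rintro ⟨⟨hx, -⟩, hy, hxy⟩
      exact ⟨hx, hy, by linarith⟩
  have hfrontier := (convex_rightTriangle a b).addHaar_frontier volume
  rw [← measure_congr (interior_ae_eq_of_null_frontier hfrontier),
    hregion, Measure.volume_eq_prod, volume_regionBetween_eq_integral integrableOn_zero
      (hg.integrableOn_Icc.mono_set Ioo_subset_Icc_self) measurableSet_Ioo ?_,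
    ← integral_Ioc_eq_integral_Ioo, ← intervalIntegral.integral_of_le ha.le]
  · congr 1
    simp only [Pi.sub_apply, sub_zero]
    rw [intervalIntegral.integral_sub intervalIntegrable_const
      ((continuous_const_mul _).intervalIntegrable _ _), intervalIntegral.integral_const,
      intervalIntegral.integral_const_mul, integral_id]
    field_simp
    ring
  · intro x hx
    rw [sub_nonneg, div_mul_eq_mul_div, div_le_iff₀ ha]
    nlinarith [hx.2]

lemma Tkl_eq_rightTriangle {k l : ℤ} (hk : 0 ≤ k) (hl : 0 < l) :
    Tkl k l = rightTriangle (1 + 1 / l) ((l + 1) * (k + 1)) := by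
  have hk' : (0 : ℝ) ≤ k := by exact_mod_cast hk
  have hl' : (0 : ℝ) < l := by exact_mod_cast hl
  exact convexHull_eq_rightTriangle (by positivity) (by positivity)

lemma interior_Tkl {k l : ℤ} (hk : 0 ≤ k) (hl : 0 < l) :
    interior (Tkl k l) =
      {p | 0 < p.1 ∧ 0 < p.2 ∧ l * (k + 1) * p.1 + p.2 < ((l : ℝ) + 1) * (k + 1)} := by
  have hl' : (0 : ℝ) < l := by exact_mod_cast hl
  rw [Tkl_eq_rightTriangle hk hl, interior_rightTriangle (by positivity)]
  ext p
  simp only [mem_ofPred_eq]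
  have : ((l : ℝ) + 1) * (k + 1) * p.1 + (1 + 1 / l) * p.2 =
      (1 + 1 / l) * (l * (k + 1) * p.1 + p.2) := by field_simp
  rw [this, mul_lt_mul_iff_right₀ (by positivity)]

lemma lattice_condition_iff {k l m n : ℤ} (hk : 0 ≤ k) (hl : 1 ≤ l) :
    0 < m ∧ 0 < n ∧ l * (k + 1) * m + n < (l + 1) * (k + 1) ↔ m = 1 ∧ n ∈ Icc 1 k := by
  constructor
  · rintro ⟨hm, hn, hlt⟩
    have hm1 : m = 1 := by
      by_contra hm1
      have : l * (k + 1) * 2 ≤ l * (k + 1) * m :=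
        mul_le_mul_of_nonneg_left (by omega) (by nlinarith)
      nlinarith
    subst hm1
    exact ⟨rfl, hn, by linarith⟩
  · rintro ⟨rfl, hn1, hnk⟩
    exact ⟨one_pos, hn1, by linarith⟩

lemma intCast_mem_interior_Tkl {k l : ℤ} (hk : 0 ≤ k) (hl : 0 < l) (m n : ℤ) :
    ((m : ℝ), (n : ℝ)) ∈ interior (Tkl k l) ↔
      0 < m ∧ 0 < n ∧ l * (k + 1) * m + n < (l + 1) * (k + 1) := by
  simp only [interior_Tkl hk hl, mem_ofPred_eq]
  norm_cast

lemma interior_Tkl_inter_latticePts {k l : ℤ} (hk : 0 ≤ k) (hl : 1 ≤ l) :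
    interior (Tkl k l) ∩ latticePts = (fun n : ℤ => ((1 : ℝ), (n : ℝ))) '' Icc 1 k := by
  ext p
  constructor
  · rintro ⟨hp, m, n, rfl⟩
    rw [intCast_mem_interior_Tkl hk (by omega), lattice_condition_iff hk hl] at hp
    obtain ⟨rfl, hn⟩ := hp
    exact ⟨n, hn, by simp⟩
  · rintro ⟨n, hn, rfl⟩
    have hmem := (intCast_mem_interior_Tkl hk (by omega) 1 n).2
      ((lattice_condition_iff hk hl).2 ⟨rfl, hn⟩)
    exact ⟨by simpa using hmem, 1, n, by simp⟩

lemma intPts_Tkl {k l : ℤ} (hk : 0 ≤ k) (hl : 1 ≤ l) : (intPts (Tkl k l) : ℤ) = k := by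
  have hinj : Function.Injective fun n : ℤ => ((1 : ℝ), (n : ℝ)) := fun m n h => by
    simpa using h
  rw [intPts, interior_Tkl_inter_latticePts hk hl, ncard_image_of_injective _ hinj,
    ← Finset.coe_Icc, ncard_coe_finset, Int.card_Icc]
  omega

lemma area_Tkl {k l : ℤ} (hk : 0 ≤ k) (hl : 0 < l) :
    area (Tkl k l) = ((l : ℝ) + 1) ^ 2 * ((k : ℝ) + 1) / (2 * (l : ℝ)) := by
  have hk' : (0 : ℝ) ≤ k := by exact_mod_cast hk
  have hl' : (0 : ℝ) < l := by exact_mod_cast hl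
  rw [area, Tkl_eq_rightTriangle hk hl, volume_rightTriangle (by positivity) (by positivity),
    ENNReal.toReal_ofReal (by positivity)]
  field_simp

theorem stmt0 (k l : ℤ) (hk : 1 ≤ k) (hl : 1 ≤ l) :
    (intPts (Tkl k l) : ℤ) = k ∧
      area (Tkl k l) = ((l : ℝ) + 1) ^ 2 * ((k : ℝ) + 1) / (2 * (l : ℝ)) :=
  ⟨intPts_Tkl (by omega) hl, area_Tkl (by omega) (by omega)⟩
end
end

section
/- Let K ⊆ ℝ² be a planar convex body with lattice width direction (1,0) and π₁(K) = [x_l, x_r]. For any h with x_l ≤ h ≤ plvsl(K), the length of the vertical slice K ∩ {x₁ = h} is at least min((x_r − x_l)/2, h − x_l); symmetrically, for plvsl(K) ≤ h ≤ x_r it is at least min((x_r − x_l)/2, x_r − h). -/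
open MeasureTheory Set

noncomputable section

/-!
The upper and lower boundaries of `K` over `[xl, xr]` are concave and convex, so at an interior
abscissa `x₀` they have supporting lines of slopes `s` and `s'`, and `K` lies between them. For
every integer `n` the width of `K` in direction `(-n, 1)`, which is at least `xr - xl` because
`(1, 0)` realises the lattice width, is then at most the slice length at `x₀` plus
`(s - n) u + (n - s') v` for some `u, v ∈ [xl - x₀, xr - x₀]`. Taking for `n` an integer between
`s'` and `s`, or averaging the two integers around them, shows that the slice at `x₀` has length
at least `min (x₀ - xl) (xr - x₀)`. For `h` left of `plvsl K` there is a longest slice at some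
`t ≥ h`, and concavity of the slice length between `xl + min ((xr - xl) / 2) (h - xl)` and `t`
gives the claim; the right half is symmetric.
-/

theorem ConvexOn.exists_affine_le_of_mem_interior {S : Set ℝ} {f : ℝ → ℝ} {x₀ : ℝ}
    (hf : ConvexOn ℝ S f) (hx₀ : x₀ ∈ interior S) :
    ∃ s : ℝ, ∀ x ∈ S, f x₀ + s * (x - x₀) ≤ f x := by
  refine ⟨derivWithin f (Ioi x₀) x₀, fun x hx => ?_⟩
  rcases lt_trichotomy x x₀ with hlt | rfl | hgt
  · have hleft := hf.slope_le_leftDeriv_of_mem_interior hx hx₀ hlt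
    have hle := hf.leftDeriv_le_rightDeriv_of_mem_interior hx₀
    rw [slope_def_field, div_le_iff₀ (sub_pos.2 hlt)] at hleft
    nlinarith
  · simp
  · have hright := hf.rightDeriv_le_slope_of_mem_interior hx₀ hx hgt
    rw [slope_def_field, le_div_iff₀ (sub_pos.2 hgt)] at hright
    linarith

theorem ConcaveOn.exists_le_affine_of_mem_interior {S : Set ℝ} {f : ℝ → ℝ} {x₀ : ℝ}
    (hf : ConcaveOn ℝ S f) (hx₀ : x₀ ∈ interior S) :
    ∃ s : ℝ, ∀ x ∈ S, f x ≤ f x₀ + s * (x - x₀) := by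
  obtain ⟨s, hs⟩ := hf.neg.exists_affine_le_of_mem_interior hx₀
  refine ⟨-s, fun x hx => ?_⟩
  have := hs x hx
  simp only [Pi.neg_apply] at this
  linarith

theorem exists_mem_ge_of_le_midpoint {S : Set ℝ} (hne : S.Nonempty) (hS : BddBelow S) {h : ℝ}
    (hh : h ≤ (sInf S + sSup S) / 2) : ∃ t ∈ S, h ≤ t := by
  by_contra! hlt
  obtain ⟨t₀, ht₀⟩ := hne
  have hsup : sSup S ≤ h := csSup_le ⟨t₀, ht₀⟩ fun t ht => (hlt t ht).le
  linarith [csInf_le hS ht₀, hlt t₀ ht₀]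

theorem exists_mem_le_of_midpoint_le {S : Set ℝ} (hne : S.Nonempty) (hS : BddAbove S) {h : ℝ}
    (hh : (sInf S + sSup S) / 2 ≤ h) : ∃ t ∈ S, t ≤ h := by
  by_contra! hlt
  obtain ⟨t₀, ht₀⟩ := hne
  have hinf : h ≤ sInf S := le_csInf ⟨t₀, ht₀⟩ fun t ht => (hlt t ht).le
  linarith [le_csSup hS ht₀, hlt t₀ ht₀]

theorem min_le_of_forall_int_shear {L a b s s' : ℝ} (ha : 0 ≤ a) (hb : 0 ≤ b)
    (hleft : (s - s') * a ≤ L) (hright : (s' - s) * b ≤ L)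
    (hshear : ∀ n : ℤ, ∃ u ∈ Icc (-a) b, ∃ v ∈ Icc (-a) b,
      a + b ≤ L + (s - n) * u + (n - s') * v) :
    min a b ≤ L := by
  set N := ⌊s'⌋
  have hN : (N : ℝ) ≤ s' := Int.floor_le s'
  have hN' : s' < N + 1 := Int.lt_floor_add_one s'
  rcases le_or_gt s N with hsN | hNs
  · obtain ⟨u, hu, v, hv, h⟩ := hshear N
    have hL : a + b ≤ L + (s' - s) * a := by nlinarith [hu.1, hv.1]
    refine (min_le_right _ _).trans ?_
    rcases le_total (s' - s) 1 with hd | hd <;> nlinarith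
  rcases le_or_gt (N + 1 : ℝ) s with hsN | hsN
  · obtain ⟨u, hu, v, hv, h⟩ := hshear (N + 1)
    push_cast at h
    have hL : a + b ≤ L + (s - s') * b := by nlinarith [hu.2, hv.2]
    refine (min_le_left _ _).trans ?_
    rcases le_total (s - s') 1 with hd | hd <;> nlinarith
  · obtain ⟨u, hu, v, hv, h⟩ := hshear N
    obtain ⟨u', hu', v', hv', h'⟩ := hshear (N + 1)
    push_cast at h'
    have hL : a + b ≤ L + (s - N) * b + (s' - N) * a := by nlinarith [hu.2, hv.1]
    have hL' : a + b ≤ L + (N + 1 - s) * a + (N + 1 - s') * b := by nlinarith [hu'.1, hv'.2]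
    rcases le_total a b with hab | hab
    · exact (min_le_left _ _).trans (by nlinarith)
    · exact (min_le_right _ _).trans (by nlinarith)

def sliceTop (K : Set (ℝ × ℝ)) (t : ℝ) : ℝ := sSup (Prod.mk t ⁻¹' K)

def sliceBot (K : Set (ℝ × ℝ)) (t : ℝ) : ℝ := sInf (Prod.mk t ⁻¹' K)

section Slices

variable {K : Set (ℝ × ℝ)}

theorem IsCompact.preimage_prodMk (hK : IsCompact K) (t : ℝ) : IsCompact (Prod.mk t ⁻¹' K) :=
  (hK.image continuous_snd).of_isClosed_subset (hK.isClosed.preimage (by fun_prop))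
    fun y hy => ⟨(t, y), hy, rfl⟩

theorem Convex.preimage_prodMk (hK : Convex ℝ K) (t : ℝ) : Convex ℝ (Prod.mk t ⁻¹' K) :=
  convex_iff_segment_subset.2 fun y₁ h₁ y₂ h₂ _ hy =>
    hK.segment_subset h₁ h₂ (Prod.image_mk_segment_right (𝕜 := ℝ) t y₁ y₂ ▸ mem_image_of_mem _ hy)

theorem le_sliceTop (hK : IsCompact K) {t y : ℝ} (h : (t, y) ∈ K) : y ≤ sliceTop K t :=
  le_csSup (hK.preimage_prodMk t).bddAbove h

theorem sliceBot_le (hK : IsCompact K) {t y : ℝ} (h : (t, y) ∈ K) : sliceBot K t ≤ y :=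
  csInf_le (hK.preimage_prodMk t).bddBelow h

theorem preimage_prodMk_nonempty {t : ℝ} (ht : t ∈ Prod.fst '' K) : (Prod.mk t ⁻¹' K).Nonempty := by
  obtain ⟨p, hp, rfl⟩ := ht
  exact ⟨p.2, hp⟩

theorem mk_sliceTop_mem (hK : IsCompact K) {t : ℝ} (ht : t ∈ Prod.fst '' K) :
    (t, sliceTop K t) ∈ K :=
  (hK.preimage_prodMk t).sSup_mem (preimage_prodMk_nonempty ht)

theorem mk_sliceBot_mem (hK : IsCompact K) {t : ℝ} (ht : t ∈ Prod.fst '' K) :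
    (t, sliceBot K t) ∈ K :=
  (hK.preimage_prodMk t).sInf_mem (preimage_prodMk_nonempty ht)

theorem sliceBot_le_sliceTop (hK : IsCompact K) {t : ℝ} (ht : t ∈ Prod.fst '' K) :
    sliceBot K t ≤ sliceTop K t :=
  sliceBot_le hK (mk_sliceTop_mem hK ht)

theorem sliceLen_eq (hK : IsCompact K) (hconv : Convex ℝ K) {t : ℝ} (ht : t ∈ Prod.fst '' K) :
    sliceLen K t = sliceTop K t - sliceBot K t := by
  have hIcc : Prod.mk t ⁻¹' K = Icc (sliceBot K t) (sliceTop K t) :=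
    eq_Icc_of_connected_compact ((hconv.preimage_prodMk t).isConnected
      (preimage_prodMk_nonempty ht)) (hK.preimage_prodMk t)
  rw [sliceLen, show {y | (t, y) ∈ K} = Prod.mk t ⁻¹' K from rfl, hIcc, Real.volume_Icc,
    ENNReal.toReal_ofReal (sub_nonneg.2 (sliceBot_le_sliceTop hK ht))]

theorem concaveOn_sliceTop (hK : IsCompact K) (hconv : Convex ℝ K) :
    ConcaveOn ℝ (Prod.fst '' K) (sliceTop K) := by
  refine ⟨hconv.is_linear_image (LinearMap.fst ℝ ℝ ℝ).isLinear, fun x hx y hy a b ha hb hab => ?_⟩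
  have hmem := hconv (mk_sliceTop_mem hK hx) (mk_sliceTop_mem hK hy) ha hb hab
  simp only [Prod.smul_mk, Prod.mk_add_mk] at hmem
  exact le_sliceTop hK hmem

theorem convexOn_sliceBot (hK : IsCompact K) (hconv : Convex ℝ K) :
    ConvexOn ℝ (Prod.fst '' K) (sliceBot K) := by
  refine ⟨hconv.is_linear_image (LinearMap.fst ℝ ℝ ℝ).isLinear, fun x hx y hy a b ha hb hab => ?_⟩
  have hmem := hconv (mk_sliceBot_mem hK hx) (mk_sliceBot_mem hK hy) ha hb hab
  simp only [Prod.smul_mk, Prod.mk_add_mk] at hmem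
  exact sliceBot_le hK hmem

theorem concaveOn_sliceLen (hK : IsCompact K) (hconv : Convex ℝ K) :
    ConcaveOn ℝ (Prod.fst '' K) (sliceLen K) :=
  ((concaveOn_sliceTop hK hconv).sub (convexOn_sliceBot hK hconv)).congr
    fun _ ht => (sliceLen_eq hK hconv ht).symm

theorem maxSlicePos_nonempty (hK : IsCompact K) (hconv : Convex ℝ K) (hne : K.Nonempty) :
    (maxSlicePos K).Nonempty := by
  set D : Set ((ℝ × ℝ) × (ℝ × ℝ)) := (K ×ˢ K) ∩ {pq | pq.1.1 = pq.2.1}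
  have hD : IsCompact D := (hK.prod hK).inter_right (isClosed_eq (by fun_prop) (by fun_prop))
  obtain ⟨p, hp⟩ := hne
  obtain ⟨⟨P, Q⟩, ⟨⟨hP, hQ⟩, hPQ⟩, hmax⟩ := hD.exists_isMaxOn ⟨(p, p), ⟨hp, hp⟩, rfl⟩
    (Continuous.continuousOn (f := fun pq : (ℝ × ℝ) × (ℝ × ℝ) => pq.1.2 - pq.2.2) (by fun_prop))
  have hPt : P.1 ∈ Prod.fst '' K := ⟨P, hP, rfl⟩
  refine ⟨P.1, hPt, fun t ht => ?_⟩
  have hslice : sliceTop K t - sliceBot K t ≤ P.2 - Q.2 :=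
    @hmax ((t, sliceTop K t), (t, sliceBot K t))
      ⟨⟨mk_sliceTop_mem hK ht, mk_sliceBot_mem hK ht⟩, rfl⟩
  have hQ' : (P.1, Q.2) ∈ K := by rw [hPQ]; exact hQ
  rw [sliceLen_eq hK hconv ht, sliceLen_eq hK hconv hPt]
  linarith [le_sliceTop hK hP, sliceBot_le hK hQ']

end Slices

section Width

variable {K : Set (ℝ × ℝ)}

theorem exists_width_eq (hK : IsCompact K) (hne : K.Nonempty) (v : ℝ × ℝ) :
    ∃ p ∈ K, ∃ q ∈ K, width K v = (v.1 * p.1 + v.2 * p.2) - (v.1 * q.1 + v.2 * q.2) := by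
  have hc := hK.image (f := fun p : ℝ × ℝ => v.1 * p.1 + v.2 * p.2) (by fun_prop)
  obtain ⟨p, hp, hpv⟩ := hc.sSup_mem (hne.image _)
  obtain ⟨q, hq, hqv⟩ := hc.sInf_mem (hne.image _)
  exact ⟨p, hp, q, hq, by rw [width, ← hpv, ← hqv]⟩

theorem width_nonneg (hK : IsCompact K) (hne : K.Nonempty) (v : ℝ × ℝ) : 0 ≤ width K v :=
  have hc := hK.image (f := fun p : ℝ × ℝ => v.1 * p.1 + v.2 * p.2) (by fun_prop)
  sub_nonneg.2 (csInf_le_csSup (hne.image _) hc.bddBelow hc.bddAbove)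

theorem latticeWidth_le_width (hK : IsCompact K) (hne : K.Nonempty) {v : ℤ × ℤ} (hv : v ≠ 0) :
    latticeWidth K ≤ width K (v.1, v.2) :=
  csInf_le ⟨0, by rintro _ ⟨u, -, rfl⟩; exact width_nonneg hK hne _⟩ ⟨v, hv, rfl⟩

theorem width_one_zero {xl xr : ℝ} (hproj : Prod.fst '' K = Icc xl xr) (hlr : xl ≤ xr) :
    width K (1, 0) = xr - xl := by
  simp only [width, one_mul, zero_mul, add_zero]
  change sSup (Prod.fst '' K) - sInf (Prod.fst '' K) = _
  rw [hproj, csSup_Icc hlr, csInf_Icc hlr]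

end Width

theorem min_sub_le_sliceLen {K : Set (ℝ × ℝ)} {xl xr : ℝ} (hK : IsConvexBody K)
    (hproj : Prod.fst '' K = Icc xl xr) (hdir : width K (1, 0) = latticeWidth K) {x₀ : ℝ}
    (hx₀ : x₀ ∈ Icc xl xr) :
    min (x₀ - xl) (xr - x₀) ≤ sliceLen K x₀ := by
  obtain ⟨hc, hconv, -⟩ := hK
  have hlr : xl ≤ xr := hx₀.1.trans hx₀.2
  rcases hx₀.1.eq_or_lt with rfl | hl
  · rw [sub_self]
    exact (min_le_left _ _).trans ENNReal.toReal_nonneg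
  rcases hx₀.2.eq_or_lt with rfl | hr
  · rw [sub_self]
    exact (min_le_right _ _).trans ENNReal.toReal_nonneg
  have hint : x₀ ∈ interior (Prod.fst '' K) := by rw [hproj, interior_Icc]; exact ⟨hl, hr⟩
  obtain ⟨s, htop⟩ := (concaveOn_sliceTop hc hconv).exists_le_affine_of_mem_interior hint
  obtain ⟨s', hbot⟩ := (convexOn_sliceBot hc hconv).exists_affine_le_of_mem_interior hint
  have hlen : ∀ t ∈ Icc xl xr, sliceBot K t ≤ sliceTop K t := fun t ht =>
    sliceBot_le_sliceTop hc (hproj ▸ ht)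
  have hK : K.Nonempty := image_nonempty.1 ⟨x₀, hproj ▸ hx₀⟩
  rw [hproj] at htop hbot
  rw [sliceLen_eq hc hconv (hproj ▸ hx₀)]
  refine min_le_of_forall_int_shear (s := s) (s' := s') (by linarith) (by linarith) ?_ ?_
    fun n => ?_
  · have hxl := left_mem_Icc.2 hlr
    linarith [htop xl hxl, hbot xl hxl, hlen xl hxl]
  · have hxr := right_mem_Icc.2 hlr
    linarith [htop xr hxr, hbot xr hxr, hlen xr hxr]
  obtain ⟨p, hp, q, hq, hpq⟩ := exists_width_eq hc hK (-(n : ℝ), 1)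
  have hw : xr - xl ≤ width K (-(n : ℝ), 1) := by
    rw [← width_one_zero hproj hlr, hdir]
    simpa using latticeWidth_le_width hc hK (v := (-n, 1)) (by simp)
  have hp₁ : p.1 ∈ Icc xl xr := hproj ▸ mem_image_of_mem _ hp
  have hq₁ : q.1 ∈ Icc xl xr := hproj ▸ mem_image_of_mem _ hq
  refine ⟨p.1 - x₀, ⟨by linarith [hp₁.1], by linarith [hp₁.2]⟩,
    q.1 - x₀, ⟨by linarith [hq₁.1], by linarith [hq₁.2]⟩, ?_⟩
  linarith [le_sliceTop hc hp, htop p.1 hp₁, sliceBot_le hc hq, hbot q.1 hq₁]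

section Clauses

variable {K : Set (ℝ × ℝ)} {xl xr : ℝ} (hK : IsConvexBody K) (hproj : Prod.fst '' K = Icc xl xr)
  (hdir : width K (1, 0) = latticeWidth K)
include hK hproj hdir

theorem min_half_sub_left_le_sliceLen {h : ℝ} (hl : xl ≤ h) (hh : h ≤ plvsl K) :
    min ((xr - xl) / 2) (h - xl) ≤ sliceLen K h := by
  have hM : maxSlicePos K ⊆ Icc xl xr := fun t ht => hproj ▸ ht.1
  obtain ⟨t, ⟨htK, htmax⟩, hht⟩ := exists_mem_ge_of_le_midpoint
    (maxSlicePos_nonempty hK.1 hK.2.1 (hK.2.2.mono interior_subset)) (bddBelow_Icc.mono hM) hh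
  set r := min ((xr - xl) / 2) (h - xl)
  have hr_half : r ≤ (xr - xl) / 2 := min_le_left _ _
  have hrh : r ≤ h - xl := min_le_right _ _
  have hp : xl + r ∈ Icc xl xr := by
    have : 0 ≤ r := le_min (by linarith [(hM ⟨htK, htmax⟩).2]) (by linarith)
    constructor <;> linarith
  have hpK : xl + r ∈ Prod.fst '' K := hproj ▸ hp
  have hpr : r ≤ sliceLen K (xl + r) :=
    (le_min (by linarith) (by linarith)).trans (min_sub_le_sliceLen hK hproj hdir hp)
  calc r ≤ min (sliceLen K (xl + r)) (sliceLen K t) := le_min hpr (hpr.trans (htmax _ hpK))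
    _ ≤ sliceLen K h :=
      (concaveOn_sliceLen hK.1 hK.2.1).min_le_of_mem_Icc hpK htK ⟨by linarith, hht⟩

theorem min_half_sub_right_le_sliceLen {h : ℝ} (hh : plvsl K ≤ h) (hr : h ≤ xr) :
    min ((xr - xl) / 2) (xr - h) ≤ sliceLen K h := by
  have hM : maxSlicePos K ⊆ Icc xl xr := fun t ht => hproj ▸ ht.1
  obtain ⟨t, ⟨htK, htmax⟩, hth⟩ := exists_mem_le_of_midpoint_le
    (maxSlicePos_nonempty hK.1 hK.2.1 (hK.2.2.mono interior_subset)) (bddAbove_Icc.mono hM) hh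
  set r := min ((xr - xl) / 2) (xr - h)
  have hr_half : r ≤ (xr - xl) / 2 := min_le_left _ _
  have hrh : r ≤ xr - h := min_le_right _ _
  have hp : xr - r ∈ Icc xl xr := by
    have : 0 ≤ r := le_min (by linarith [(hM ⟨htK, htmax⟩).1]) (by linarith)
    constructor <;> linarith
  have hpK : xr - r ∈ Prod.fst '' K := hproj ▸ hp
  have hpr : r ≤ sliceLen K (xr - r) :=
    (le_min (by linarith) (by linarith)).trans (min_sub_le_sliceLen hK hproj hdir hp)
  calc r ≤ min (sliceLen K t) (sliceLen K (xr - r)) := le_min (hpr.trans (htmax _ hpK)) hpr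
    _ ≤ sliceLen K h :=
      (concaveOn_sliceLen hK.1 hK.2.1).min_le_of_mem_Icc htK hpK ⟨hth, by linarith⟩

end Clauses

theorem stmt4 (K : Set (ℝ × ℝ)) (hK : IsConvexBody K) (xl xr : ℝ)
    (hproj : Prod.fst '' K = Set.Icc xl xr)
    (hdir : width K (1, 0) = latticeWidth K) :
    (∀ h : ℝ, xl ≤ h → h ≤ plvsl K →
        min ((xr - xl) / 2) (h - xl) ≤ sliceLen K h) ∧
      (∀ h : ℝ, plvsl K ≤ h → h ≤ xr →
        min ((xr - xl) / 2) (xr - h) ≤ sliceLen K h) :=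
  ⟨fun _ => min_half_sub_left_le_sliceLen hK hproj hdir,
    fun _ => min_half_sub_right_le_sliceLen hK hproj hdir⟩
end
end
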